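/- Correctness of asynchronous FloodSet (all-ones case): consider a run of the FloodSet global machine of dimension n in which every automaton starts in state i₁ (input bit 1). Then no automaton ever broadcasts 0 nor reaches state o₀; hence at every time each automaton is in state i₁ or o₁, and if additionally every non-idle-forever automaton eventually fires its initial broadcast, then eventually all automata are in state o₁. -/

import Mathlib

/-- States of the FloodSet protocol. -/
inductive FState where
  | i0 | i1 | o0 | o1
deriving DecidableEq

/-- Actions: broadcasts `b0, b1` (messages 0,1) and reactions `r0, r1` (0̄, 1̄). -/
inductive FAct where
  | b0 | b1 | r0 | r1
deriving DecidableEq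

/-- Broadcast messages 0 and 1. -/
inductive FMsg where
  | m0 | m1
deriving DecidableEq

/-- The FloodSet transition relation. -/
def ftau (q : FState) (a : FAct) (r : FState) : Prop :=
  (q = .i0 ∧ a = .b0 ∧ r = .o0) ∨
  (q = .o0 ∧ a = .r0 ∧ r = .o0) ∨
  (q = .o0 ∧ a = .r1 ∧ r = .o0) ∨
  (q = .i1 ∧ a = .b1 ∧ r = .o1) ∨
  (q = .o1 ∧ a = .r0 ∧ r = .o0) ∨
  (q = .o1 ∧ a = .r1 ∧ r = .o1)

/-!
When every automaton starts in `i₁`, the message 0 is never created: only `i₀` can broadcast it,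
and `o₀`, the only state reached from a `1`-state by receiving 0, needs 0 to be already around.
So "all automata are in `i₁` or `o₁` and 0 is not in the environment" is an inductive invariant
of the run. Under it every non-idle step ends in `o₁`, which is then never left; fairness makes
each automaton take such a step, and finitely many automata settle by a common time.
-/

namespace FloodSet

def OneState (q : FState) : Prop := q = .i1 ∨ q = .o1

def IsStep (q : FState) (α : Option FAct) (r : FState) : Prop :=
  (∀ a, α = some a → ftau q a r) ∧ (α = none → q = r)

theorem OneState.ne_o0 {q : FState} (hq : OneState q) : q ≠ .o0 := by
  rcases hq with rfl | rfl <;> decide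

theorem OneState.not_ftau_b0 {q r : FState} (hq : OneState q) : ¬ ftau q .b0 r := by
  rcases hq with rfl | rfl <;> simp [ftau]

theorem OneState.eq_o1_of_ftau {q r : FState} {a : FAct} (hq : OneState q) (ha : a ≠ .r0)
    (h : ftau q a r) : r = .o1 := by
  rcases hq with rfl | rfl <;> cases a <;> simp_all [ftau]

theorem IsStep.eq_o1_of_ne_none {q r : FState} {α : Option FAct} (h : IsStep q α r)
    (hq : OneState q) (hα : α ≠ none) (hr0 : α ≠ some .r0) : r = .o1 := by
  obtain ⟨a, rfl⟩ := Option.ne_none_iff_exists'.1 hα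
  exact hq.eq_o1_of_ftau (fun ha => hr0 (congrArg some ha)) (h.1 a rfl)

theorem IsStep.oneState {q r : FState} {α : Option FAct} (h : IsStep q α r) (hq : OneState q)
    (hr0 : α ≠ some .r0) : OneState r := by
  by_cases hα : α = none
  · exact h.2 hα ▸ hq
  · exact Or.inr (h.eq_o1_of_ne_none hq hα hr0)

variable {n : ℕ} {s : ℕ → Fin n → FState} {σ : ℕ → Fin n → Option FAct}
  {E Delivered : ℕ → Set FMsg}

theorem not_broadcast_m0 (hrun : ∀ i j, IsStep (s i j) (σ i j) (s (i + 1) j)) {i : ℕ}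
    (hs : ∀ j, OneState (s i j)) (j : Fin n) : σ i j ≠ some .b0 :=
  fun hb => (hs j).not_ftau_b0 ((hrun i j).1 _ hb)

theorem not_receive_m0 (hrun : ∀ i j, IsStep (s i j) (σ i j) (s (i + 1) j))
    (hrecv0 : ∀ i j, σ i j = some .r0 → (FMsg.m0 ∈ E i ∨ ∃ k, σ i k = some .b0)) {i : ℕ}
    (hs : ∀ j, OneState (s i j)) (hE : FMsg.m0 ∉ E i) (j : Fin n) : σ i j ≠ some .r0 := by
  intro hr
  rcases hrecv0 i j hr with hm | ⟨k, hk⟩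
  · exact hE hm
  · exact not_broadcast_m0 hrun hs k hk

theorem m0_not_mem_succ (hrun : ∀ i j, IsStep (s i j) (σ i j) (s (i + 1) j))
    (hrec : ∀ i, E (i + 1) =
      (E i ∪ {m : FMsg | (m = .m0 ∧ ∃ j, σ i j = some .b0) ∨
                          (m = .m1 ∧ ∃ j, σ i j = some .b1)}) \ Delivered i)
    {i : ℕ} (hs : ∀ j, OneState (s i j)) (hE : FMsg.m0 ∉ E i) : FMsg.m0 ∉ E (i + 1) := by
  rw [hrec i]
  rintro ⟨hE' | ⟨-, k, hk⟩ | ⟨hm, -⟩, -⟩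
  · exact hE hE'
  · exact not_broadcast_m0 hrun hs k hk
  · exact FMsg.noConfusion hm

theorem oneState_and_m0_not_mem (hrun : ∀ i j, IsStep (s i j) (σ i j) (s (i + 1) j))
    (hE0 : E 0 = ∅)
    (hrec : ∀ i, E (i + 1) =
      (E i ∪ {m : FMsg | (m = .m0 ∧ ∃ j, σ i j = some .b0) ∨
                          (m = .m1 ∧ ∃ j, σ i j = some .b1)}) \ Delivered i)
    (hrecv0 : ∀ i j, σ i j = some .r0 → (FMsg.m0 ∈ E i ∨ ∃ k, σ i k = some .b0))
    (hinit : ∀ j, s 0 j = .i1) (i : ℕ) : (∀ j, OneState (s i j)) ∧ FMsg.m0 ∉ E i := by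
  induction i with
  | zero => exact ⟨fun j => Or.inl (hinit j), by simp [hE0]⟩
  | succ i ih =>
    obtain ⟨hs, hE⟩ := ih
    exact ⟨fun j => (hrun i j).oneState (hs j) (not_receive_m0 hrun hrecv0 hs hE j),
      m0_not_mem_succ hrun hrec hs hE⟩

theorem eq_o1_of_le (hrun : ∀ i j, IsStep (s i j) (σ i j) (s (i + 1) j)) {j : Fin n}
    (hr0 : ∀ i, σ i j ≠ some .r0) {i l : ℕ} (hi : s i j = .o1) (hil : i ≤ l) : s l j = .o1 := by
  induction l, hil using Nat.le_induction with
  | base => exact hi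
  | succ l _ ih =>
    by_cases hα : σ l j = none
    · exact ((hrun l j).2 hα).symm.trans ih
    · exact (hrun l j).eq_o1_of_ne_none (Or.inr ih) hα (hr0 l)

end FloodSet

open FloodSet in
theorem stmt_11_general (n : ℕ)
    (s : ℕ → Fin n → FState) (σ : ℕ → Fin n → Option FAct)
    (E : ℕ → Set FMsg) (Delivered : ℕ → Set FMsg)
    (hrun : ∀ i j, (∀ a, σ i j = some a → ftau (s i j) a (s (i + 1) j)) ∧
      (σ i j = none → s i j = s (i + 1) j))
    (hE0 : E 0 = ∅)
    (hrec : ∀ i, E (i + 1) =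
      (E i ∪ {m : FMsg | (m = .m0 ∧ ∃ j, σ i j = some .b0) ∨
                          (m = .m1 ∧ ∃ j, σ i j = some .b1)}) \ Delivered i)
    (hrecv0 : ∀ i j, σ i j = some .r0 → (FMsg.m0 ∈ E i ∨ ∃ k, σ i k = some .b0))
    (hinit : ∀ j, s 0 j = .i1) :
    (∀ i j, σ i j ≠ some .b0) ∧
    (∀ i j, s i j ≠ .o0) ∧
    (∀ i j, s i j = .i1 ∨ s i j = .o1) ∧
    ((∀ j, ∃ i, σ i j ≠ none ∧ (s i j = .i0 ∨ s i j = .i1)) →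
      ∃ t, ∀ l, t ≤ l → ∀ j, s l j = .o1) := by
  have hstep : ∀ i j, IsStep (s i j) (σ i j) (s (i + 1) j) := hrun
  have hinv := oneState_and_m0_not_mem hstep hE0 hrec hrecv0 hinit
  have hr0 : ∀ i j, σ i j ≠ some .r0 := fun i => not_receive_m0 hstep hrecv0 (hinv i).1 (hinv i).2
  refine ⟨fun i => not_broadcast_m0 hstep (hinv i).1, fun i j => ((hinv i).1 j).ne_o0,
    fun i => (hinv i).1, fun hfair => ?_⟩
  have hsettle : ∀ j, ∀ᶠ l in Filter.atTop, s l j = .o1 := fun j => by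
    obtain ⟨i, hfire, -⟩ := hfair j
    have ho1 : s (i + 1) j = .o1 := (hstep i j).eq_o1_of_ne_none ((hinv i).1 j) hfire (hr0 i j)
    exact Filter.eventually_atTop.2 ⟨i + 1, fun l => eq_o1_of_le hstep (fun i => hr0 i j) ho1⟩
  exact Filter.eventually_atTop.1 (Filter.eventually_all.2 hsettle)

/-- correctness of asynchronous FloodSet, all-ones case.
In a run where every automaton starts in `i₁`, no automaton ever broadcasts 0
nor reaches `o₀`; every automaton is always in `i₁` or `o₁`; and under the
fairness assumption (every automaton eventually fires while still in its
initial state) eventually all automata are in `o₁` forever. -/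
theorem stmt_11 (n : ℕ)
    (s : ℕ → Fin n → FState) (σ : ℕ → Fin n → Option FAct)
    (E : ℕ → Set FMsg) (Delivered : ℕ → Set FMsg)
    (hrun : ∀ i j, (∀ a, σ i j = some a → ftau (s i j) a (s (i + 1) j)) ∧
      (σ i j = none → s i j = s (i + 1) j))
    (hE0 : E 0 = ∅)
    (hrec : ∀ i, E (i + 1) =
      (E i ∪ {m : FMsg | (m = .m0 ∧ ∃ j, σ i j = some .b0) ∨
                          (m = .m1 ∧ ∃ j, σ i j = some .b1)}) \ Delivered i)
    (hrecv0 : ∀ i j, σ i j = some .r0 → (FMsg.m0 ∈ E i ∨ ∃ k, σ i k = some .b0))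
    (hrecv1 : ∀ i j, σ i j = some .r1 → (FMsg.m1 ∈ E i ∨ ∃ k, σ i k = some .b1))
    (hinit : ∀ j, s 0 j = .i1) :
    (∀ i j, σ i j ≠ some .b0) ∧
    (∀ i j, s i j ≠ .o0) ∧
    (∀ i j, s i j = .i1 ∨ s i j = .o1) ∧
    ((∀ j, ∃ i, σ i j ≠ none ∧ (s i j = .i0 ∨ s i j = .i1)) →
      ∃ t, ∀ l, t ≤ l → ∀ j, s l j = .o1) :=
  stmt_11_general n s σ E Delivered hrun hE0 hrec hrecv0 hinit
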